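/- arXiv:1212.0678 — 3 statements merged into one kernel-verified Lean document; each statement's English description precedes it below -/
import Mathlib

section
/- If f(ζ) = Σ_{k=0}^N a_k ζ^{k+1} is a polynomial that is injective and holomorphic on a neighborhood of the closed unit disk with f(0)=0, and Ω = f(𝔻), then the harmonic moments of Ω are given by Richardson's formula: M_k = Σ (j_0+1) a_{j_0} ⋯ a_{j_k} · conj(a_{j_0+⋯+j_k+k}), where the sum runs over all multi-indices (j_0,…,j_k) ≥ (0,…,0), with the convention a_j = 0 for j > N. -/
/-!
The change of variables `z = f(w)`, whose real Jacobian is `|f'(w)|²`, turns `∫_Ω z^k dm` into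
`∫_𝔻 f^k f' conj(f') dm`. Multiplying out `f^k f'` gives a sum of monomials `w^(j₀+⋯+j_k+k)` with
exactly the coefficients of the formula (the factor `j₀+1` comes from `f'`), while
`conj f' = Σ (n+1) conj(a_n) w̄^n`. In polar coordinates `∫_𝔻 w^m w̄^n dm = π δ_{mn}/(m+1)`, so
only the diagonal terms survive and the factor `n+1` cancels.
-/

open MeasureTheory ComplexConjugate Set Metric Real

theorem Continuous.integrableOn_ball {X E : Type*} [PseudoMetricSpace X] [ProperSpace X]
    [SecondCountableTopology X] [MeasurableSpace X] [OpensMeasurableSpace X] {μ : Measure X}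
    [IsLocallyFiniteMeasure μ] [NormedAddCommGroup E] {f : X → E} (hf : Continuous f) (x : X)
    (r : ℝ) : IntegrableOn f (ball x r) μ :=
  (hf.locallyIntegrable.integrableOn_isCompact (isCompact_closedBall x r)).mono_set
    ball_subset_closedBall

theorem Complex.integral_image_eq_integral_normSq_deriv_smul {E : Type*} [NormedAddCommGroup E]
    [NormedSpace ℝ E] {s : Set ℂ} {f f' : ℂ → ℂ} (hs : MeasurableSet s)
    (hf' : ∀ x ∈ s, HasDerivWithinAt f (f' x) s x) (hf : InjOn f s) (g : ℂ → E) :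
    ∫ x in f '' s, g x = ∫ x in s, Complex.normSq (f' x) • g (f x) := by
  have hdet : ∀ c : ℂ,
      ((ContinuousLinearMap.toSpanSingleton ℂ c).restrictScalars ℝ).det = Complex.normSq c := by
    intro c
    rw [ContinuousLinearMap.det, ContinuousLinearMap.coe_restrictScalars,
      LinearMap.det_restrictScalars, ← ContinuousLinearMap.det,
      ContinuousLinearMap.det_toSpanSingleton, Algebra.norm_complex_apply]
  simpa only [hdet, abs_of_nonneg (Complex.normSq_nonneg _)]
    using integral_image_eq_integral_abs_det_fderiv_smul volume hs
      (fun x hx => (hf' x hx).hasFDerivWithinAt.restrictScalars ℝ) hf g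

theorem setIntegral_ball_zero_eq_polarCoord {E : Type*} [NormedAddCommGroup E]
    [NormedSpace ℝ E] (R : ℝ) (g : ℂ → E) :
    ∫ z in ball (0 : ℂ) R, g z =
      ∫ p in Ioo 0 R ×ˢ Ioo (-π) π, p.1 • g (Complex.polarCoord.symm p) := by
  have hpre : polarCoord.target ∩ Complex.polarCoord.symm ⁻¹' ball 0 R =
      Ioo 0 R ×ˢ Ioo (-π) π := by
    ext ⟨r, θ⟩
    simp only [polarCoord_target, mem_inter_iff, mem_prod, mem_Ioi, mem_preimage, mem_ball,
      dist_zero_right, Complex.norm_polarCoord_symm, mem_Ioo]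
    constructor
    · rintro ⟨⟨hr, hθ⟩, hrR⟩
      exact ⟨⟨hr, (abs_of_pos hr) ▸ hrR⟩, hθ⟩
    · rintro ⟨⟨hr, hrR⟩, hθ⟩
      exact ⟨⟨hr, hθ⟩, (abs_of_pos hr).symm ▸ hrR⟩
  have hmeas : MeasurableSet (Complex.polarCoord.symm ⁻¹' ball (0 : ℂ) R) :=
    measurableSet_ball.preimage
      (Complex.measurableEquivRealProd.symm.measurable.comp continuous_polarCoord_symm.measurable)
  rw [← integral_indicator measurableSet_ball, ← Complex.integral_comp_polarCoord_symm, ← hpre,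
    ← setIntegral_indicator hmeas]
  congr 1 with p
  by_cases hp : Complex.polarCoord.symm p ∈ ball (0 : ℂ) R
  · rw [indicator_of_mem hp, indicator_of_mem (mem_preimage.2 hp)]
  · rw [indicator_of_notMem hp, indicator_of_notMem (mt mem_preimage.1 hp), smul_zero]

theorem integral_Ioo_zero_one_ofReal_pow (j : ℕ) :
    ∫ r in Ioo (0 : ℝ) 1, (r : ℂ) ^ j = 1 / (j + 1) := by
  rw [← integral_Ioc_eq_integral_Ioo, ← intervalIntegral.integral_of_le zero_le_one]
  simp_rw [← Complex.ofReal_pow]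
  rw [intervalIntegral.integral_ofReal, integral_pow]
  simp

theorem integral_Ioo_neg_pi_pi_exp_int_mul_I {l : ℤ} (hl : l ≠ 0) :
    ∫ θ in Ioo (-π) π, Complex.exp (l * θ * Complex.I) = 0 := by
  have hc : (l : ℂ) * Complex.I ≠ 0 := mul_ne_zero (Int.cast_ne_zero.2 hl) Complex.I_ne_zero
  have hperiodic : Complex.exp (l * Complex.I * π) = Complex.exp (l * Complex.I * ↑(-π)) :=
    Complex.exp_eq_exp_iff_exists_int.2 ⟨l, by push_cast; ring⟩
  rw [← integral_Ioc_eq_integral_Ioo,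
    ← intervalIntegral.integral_of_le (neg_le_self pi_pos.le)]
  simp_rw [mul_right_comm _ _ Complex.I]
  rw [integral_exp_mul_complex hc, hperiodic, sub_self, zero_div]

theorem Complex.polarCoord_symm_pow_mul_conj_pow (p : ℝ × ℝ) (m n : ℕ) :
    Complex.polarCoord.symm p ^ m * conj (Complex.polarCoord.symm p) ^ n =
      (p.1 : ℂ) ^ (m + n) * Complex.exp (((m - n : ℤ) : ℂ) * p.2 * Complex.I) := by
  have hpolar : Complex.polarCoord.symm p = p.1 * Complex.exp (p.2 * Complex.I) := by
    rw [Complex.polarCoord_symm_apply, Complex.exp_mul_I, ← Complex.ofReal_cos,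
      ← Complex.ofReal_sin]
  rw [hpolar, map_mul, ← Complex.exp_conj, Complex.conj_ofReal, mul_pow, mul_pow,
    ← Complex.exp_nat_mul, ← Complex.exp_nat_mul, mul_mul_mul_comm, ← pow_add, ← Complex.exp_add]
  congr 2
  simp only [map_mul, Complex.conj_ofReal, Complex.conj_I]
  push_cast
  ring

theorem integral_ball_pow_mul_conj_pow (m n : ℕ) :
    ∫ z in ball (0 : ℂ) 1, z ^ m * conj z ^ n = if m = n then (π : ℂ) / (m + 1) else 0 := by
  have hpolar : ∫ z in ball (0 : ℂ) 1, z ^ m * conj z ^ n =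
      (∫ r in Ioo (0 : ℝ) 1, (r : ℂ) ^ (m + n + 1)) *
        ∫ θ in Ioo (-π) π, Complex.exp (((m - n : ℤ) : ℂ) * θ * Complex.I) := by
    rw [setIntegral_ball_zero_eq_polarCoord, Measure.volume_eq_prod, ← setIntegral_prod_mul]
    refine setIntegral_congr_fun (measurableSet_Ioo.prod measurableSet_Ioo) fun p _ => ?_
    simp only [Complex.polarCoord_symm_pow_mul_conj_pow, Complex.real_smul]
    ring
  rw [hpolar, integral_Ioo_zero_one_ofReal_pow]
  split_ifs with hmn
  · subst hmn
    simp only [sub_self, Int.cast_zero, zero_mul, Complex.exp_zero]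
    rw [setIntegral_const, Real.volume_real_Ioo_of_le (neg_le_self pi_pos.le), Complex.real_smul,
      mul_one]
    push_cast
    rw [show (m : ℂ) + m + 1 + 1 = 2 * (m + 1) by ring, show (π : ℂ) - -π = 2 * π by ring]
    field_simp
  · rw [integral_Ioo_neg_pi_pi_exp_int_mul_I (sub_ne_zero.2 (Nat.cast_injective.ne hmn)), mul_zero]

theorem integral_ball_pow_mul_conj_sum (m : ℕ) (s : Finset ℕ) (b : ℕ → ℂ) :
    ∫ w in ball (0 : ℂ) 1, w ^ m * conj (∑ n ∈ s, b n * w ^ n) =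
      if m ∈ s then π * conj (b m) / (m + 1) else 0 := by
  have hterm : ∀ n, ∫ w in ball (0 : ℂ) 1, conj (b n) * (w ^ m * conj w ^ n) =
      if m = n then π * conj (b m) / (m + 1) else 0 := by
    intro n
    rw [integral_const_mul, integral_ball_pow_mul_conj_pow]
    split_ifs with h
    · subst h; ring
    · exact mul_zero _
  simp_rw [map_sum, map_mul, map_pow, Finset.mul_sum, mul_left_comm _ (conj (b _))]
  rw [integral_finsetSum _ fun n _ => Continuous.integrableOn_ball (by fun_prop) 0 1]
  simp_rw [hterm]
  exact Finset.sum_ite_eq s m _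

theorem integral_ball_pow_mul_conj_sum_succ_mul (N : ℕ) (a : ℕ → ℂ) (ha : ∀ j, N < j → a j = 0)
    (m : ℕ) :
    ∫ w in ball (0 : ℂ) 1, w ^ m * conj (∑ j ∈ Finset.range (N + 1), (j + 1) * a j * w ^ j) =
      π * conj (a m) := by
  rw [integral_ball_pow_mul_conj_sum]
  split_ifs with hm
  · simp only [map_mul, map_add, map_natCast, map_one]
    field_simp [Nat.cast_add_one_ne_zero m]
  · rw [ha m (by simpa using hm), map_zero, mul_zero]

theorem hasDerivAt_sum_mul_pow_succ {𝕜 : Type*} [NontriviallyNormedField 𝕜] (s : Finset ℕ)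
    (a : ℕ → 𝕜) (x : 𝕜) :
    HasDerivAt (fun z => ∑ j ∈ s, a j * z ^ (j + 1)) (∑ j ∈ s, (j + 1) * a j * x ^ j) x := by
  refine HasDerivAt.fun_sum fun j _ => ((hasDerivAt_pow (j + 1) x).const_mul (a j)).congr_deriv ?_
  rw [Nat.add_sub_cancel]
  push_cast
  ring

theorem sum_mul_pow_succ_pow_mul_sum {R : Type*} [CommSemiring R] (s : Finset ℕ) (a : ℕ → R)
    (x : R) (k : ℕ) :
    (∑ j ∈ s, a j * x ^ (j + 1)) ^ k * ∑ j ∈ s, (j + 1) * a j * x ^ j =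
      ∑ p ∈ Fintype.piFinset fun _ : Fin (k + 1) => s,
        (p 0 + 1) * (∏ i, a (p i)) * x ^ ((∑ i, p i) + k) := by
  set g : Fin (k + 1) → ℕ → R := Fin.cases (fun j => (j + 1) * a j * x ^ j)
    fun _ j => a j * x ^ (j + 1)
  calc (∑ j ∈ s, a j * x ^ (j + 1)) ^ k * ∑ j ∈ s, (j + 1) * a j * x ^ j
      = ∏ i, ∑ j ∈ s, g i j := by
        rw [Fin.prod_univ_succ]
        simp [g, Finset.prod_const, mul_comm]
    _ = ∑ p ∈ Fintype.piFinset fun _ : Fin (k + 1) => s, ∏ i, g i (p i) := Finset.prod_univ_sum _ _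
    _ = _ := Finset.sum_congr rfl fun p _ => by
        rw [Fin.prod_univ_succ]
        simp only [g, Fin.cases_zero, Fin.cases_succ]
        rw [Finset.prod_mul_distrib, Finset.prod_pow_eq_pow_sum,
          Fin.prod_univ_succ (fun i => a (p i)), Fin.sum_univ_succ (fun i => p i),
          Finset.sum_add_distrib]
        simp only [Finset.sum_const, Finset.card_univ, Fintype.card_fin, smul_eq_mul, mul_one]
        ring

theorem finsum_eq_sum_piFinset_range {ι M : Type*} [Fintype ι] [DecidableEq ι]
    [AddCommMonoid M] (N : ℕ) (g : (ι → ℕ) → M) (hg : ∀ p i, N < p i → g p = 0) :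
    ∑ᶠ p, g p = ∑ p ∈ Fintype.piFinset fun _ : ι => Finset.range (N + 1), g p := by
  refine finsum_eq_finsetSum_of_support_subset _ fun p hp => ?_
  rw [Finset.mem_coe, Fintype.mem_piFinset]
  intro i
  by_contra hi
  exact hp (hg p i (by simpa using hi))

/-- **Richardson's formula.** If `f(ζ) = Σ_{k=0}^N a_k ζ^{k+1}` is a polynomial which is
injective (univalent) on a neighborhood of the closed unit disk, with `f(0) = 0`, and
`Ω = f(𝔻)`, then the harmonic moments `M_k = (1/π)∫_Ω z^k dm(z)` are given by
`M_k = Σ (j_0+1) a_{j_0} ⋯ a_{j_k} conj(a_{j_0+⋯+j_k+k})`, the sum being over all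
multi-indices `(j_0,…,j_k) ≥ (0,…,0)`, with the convention `a_j = 0` for `j > N`. -/
theorem richardson_formula (N : ℕ) (a : ℕ → ℂ) (ha : ∀ j, N < j → a j = 0)
    (f : ℂ → ℂ) (hf : ∀ ζ, f ζ = ∑ k ∈ Finset.range (N + 1), a k * ζ ^ (k + 1))
    (ε : ℝ) (hε : 0 < ε) (hinj : Set.InjOn f (Metric.closedBall (0 : ℂ) (1 + ε)))
    (k : ℕ) :
    (1 / (Real.pi : ℂ)) * ∫ z in f '' Metric.ball (0 : ℂ) 1, z ^ k =
      ∑ᶠ j : Fin (k + 1) → ℕ,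
        ((j 0 : ℂ) + 1) * (∏ i, a (j i)) * conj (a ((∑ i, j i) + k)) := by
  set f' : ℂ → ℂ := fun w => ∑ j ∈ Finset.range (N + 1), (j + 1) * a j * w ^ j
  set T := Fintype.piFinset fun _ : Fin (k + 1) => Finset.range (N + 1)
  have hderiv : ∀ w, HasDerivAt f (f' w) w := by
    simpa only [← funext hf] using hasDerivAt_sum_mul_pow_succ (Finset.range (N + 1)) a
  have hball : ball (0 : ℂ) 1 ⊆ closedBall 0 (1 + ε) :=
    ball_subset_closedBall.trans (closedBall_subset_closedBall (by linarith))
  have hintegrand : ∀ w, Complex.normSq (f' w) • f w ^ k = ∑ p ∈ T,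
      ((p 0 + 1) * ∏ i, a (p i)) * (w ^ ((∑ i, p i) + k) * conj (f' w)) := by
    intro w
    rw [Complex.real_smul, ← Complex.mul_conj, show f' w * conj (f' w) * f w ^ k =
      f w ^ k * f' w * conj (f' w) by ring, hf, sum_mul_pow_succ_pow_mul_sum, Finset.sum_mul]
    simp only [T, mul_assoc]
  calc (1 / (π : ℂ)) * ∫ z in f '' ball (0 : ℂ) 1, z ^ k
      = (1 / π) * ∫ w in ball (0 : ℂ) 1, Complex.normSq (f' w) • f w ^ k := by
        rw [Complex.integral_image_eq_integral_normSq_deriv_smul measurableSet_ball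
          (fun w _ => (hderiv w).hasDerivWithinAt) (hinj.mono hball)]
    _ = (1 / π) * ∑ p ∈ T, ((p 0 + 1) * ∏ i, a (p i)) * (π * conj (a ((∑ i, p i) + k))) := by
        simp_rw [hintegrand]
        rw [integral_finsetSum _ fun p _ => Continuous.integrableOn_ball (by fun_prop) 0 1]
        simp_rw [integral_const_mul, f', integral_ball_pow_mul_conj_sum_succ_mul N a ha]
    _ = ∑ p ∈ T, ((p 0 : ℂ) + 1) * (∏ i, a (p i)) * conj (a ((∑ i, p i) + k)) := by
        rw [Finset.mul_sum]
        refine Finset.sum_congr rfl fun p _ => ?_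
        field_simp [Complex.ofReal_ne_zero.2 pi_ne_zero]
    _ = _ := (finsum_eq_sum_piFinset_range N _ fun p i hi => by
        rw [Finset.prod_eq_zero (Finset.mem_univ i) (ha _ hi), mul_zero, zero_mul]).symm
end

section
/- Let f and g be rational functions on the Riemann sphere such that the meromorphic resultants Res(f,g) and Res(g,f) are both defined (no indeterminate products of zeros and poles occur). Then Res(f,g) = Res(g,f). -/
/-!
Writing `f = c ∏_p (ζ - p)^{D p}` and `g = d ∏_q (ζ - q)^{E q}`, both resultants expand into the
same double product `∏_{p,q} (p - q)^{D p · E q}`, up to signs: the leading coefficients contribute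
`d^{deg D} = 1` and `c^{deg E} = 1`, and swapping `p - q` for `q - p` contributes
`(-1)^{deg D · deg E} = 1`.
-/

open Finset

theorem zpow_sum₀ {ι G : Type*} [CommGroupWithZero G] {a : G} (ha : a ≠ 0) (s : Finset ι)
    (n : ι → ℤ) : a ^ (∑ i ∈ s, n i) = ∏ i ∈ s, a ^ n i := by
  classical
  induction s using Finset.induction_on with
  | empty => simp
  | insert _ _ h ih => rw [sum_insert h, prod_insert h, zpow_add₀ ha, ih]

section Divisor

variable {K : Type*} [Field K]

def ofDivisor (c : K) (D : K →₀ ℤ) (ζ : K) : K :=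
  c * ∏ p ∈ D.support, (ζ - p) ^ D p

def evalDivisor (g : K → K) (D : K →₀ ℤ) : K :=
  ∏ p ∈ D.support, g p ^ D p

def divisorPairing (D E : K →₀ ℤ) : K :=
  ∏ p ∈ D.support, ∏ q ∈ E.support, (p - q) ^ (D p * E q)

theorem evalDivisor_ofDivisor {c : K} (hc : c ≠ 0) {D : K →₀ ℤ} (hD : D.sum (fun _ n => n) = 0)
    (E : K →₀ ℤ) : evalDivisor (ofDivisor c E) D = divisorPairing D E := by
  have hconst : ∏ p ∈ D.support, c ^ D p = 1 := by
    rw [Finsupp.sum] at hD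
    rw [← zpow_sum₀ hc, hD, zpow_zero]
  calc evalDivisor (ofDivisor c E) D
      = (∏ p ∈ D.support, c ^ D p) * divisorPairing D E := by
        rw [evalDivisor, divisorPairing, ← prod_mul_distrib]
        refine prod_congr rfl fun p _ => ?_
        rw [ofDivisor, mul_zpow, ← prod_zpow]
        congr 1
        exact prod_congr rfl fun q _ => by rw [← zpow_mul, mul_comm]
    _ = divisorPairing D E := by rw [hconst, one_mul]

theorem divisorPairing_comm {E : K →₀ ℤ} (hE : E.sum (fun _ n => n) = 0) (D : K →₀ ℤ) :
    divisorPairing E D = divisorPairing D E := by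
  have hsign : ∏ p ∈ D.support, ∏ q ∈ E.support, (-1 : K) ^ (D p * E q) = 1 := by
    rw [Finsupp.sum] at hE
    refine prod_eq_one fun p _ => ?_
    rw [← zpow_sum₀ (neg_ne_zero.2 one_ne_zero), ← mul_sum, hE, mul_zero, zpow_zero]
  calc divisorPairing E D
      = ∏ p ∈ D.support, ∏ q ∈ E.support, ((-1 : K) * (p - q)) ^ (D p * E q) := by
        rw [divisorPairing, prod_comm]
        exact prod_congr rfl fun p _ => prod_congr rfl fun q _ => by
          rw [neg_one_mul, neg_sub, mul_comm]
    _ = (∏ p ∈ D.support, ∏ q ∈ E.support, (-1 : K) ^ (D p * E q)) * divisorPairing D E := by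
        simp only [mul_zpow, prod_mul_distrib, divisorPairing]
    _ = divisorPairing D E := by rw [hsign, one_mul]

end Divisor

theorem meromorphic_resultant_symm_general (D E : ℂ →₀ ℤ) (c d : ℂ) (hc : c ≠ 0) (hd : d ≠ 0)
    (hD : D.sum (fun _ n => n) = 0) (hE : E.sum (fun _ n => n) = 0)
    (f g : ℂ → ℂ)
    (hf : ∀ ζ, f ζ = c * ∏ p ∈ D.support, (ζ - p) ^ (D p))
    (hg : ∀ ζ, g ζ = d * ∏ q ∈ E.support, (ζ - q) ^ (E q)) :
    ∏ p ∈ D.support, g p ^ (D p) = ∏ q ∈ E.support, f q ^ (E q) := by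
  obtain rfl : f = ofDivisor c D := funext hf
  obtain rfl : g = ofDivisor d E := funext hg
  change evalDivisor (ofDivisor d E) D = evalDivisor (ofDivisor c D) E
  rw [evalDivisor_ofDivisor hd hD, evalDivisor_ofDivisor hc hE, divisorPairing_comm hE]

/-- **Symmetry of the meromorphic resultant (Weil reciprocity on ℙ¹).**
Let `f` and `g` be rational functions on the Riemann sphere, written as
`f(ζ) = c ∏_p (ζ - p)^{D p}` and `g(ζ) = d ∏_q (ζ - q)^{E q}` where the divisors
`D, E : ℂ →₀ ℤ` have total degree `0` (so there is no zero or pole at `∞`).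
If the divisors have disjoint supports (so that both resultants
`Res(f,g) = g((f)) = ∏_p g(p)^{D p}` and `Res(g,f) = f((g)) = ∏_q f(q)^{E q}`
are defined, with no indeterminate products of zeros and poles),
then `Res(f,g) = Res(g,f)`. -/
theorem meromorphic_resultant_symm (D E : ℂ →₀ ℤ) (c d : ℂ) (hc : c ≠ 0) (hd : d ≠ 0)
    (hD : D.sum (fun _ n => n) = 0) (hE : E.sum (fun _ n => n) = 0)
    (hdisj : Disjoint D.support E.support)
    (f g : ℂ → ℂ)
    (hf : ∀ ζ, f ζ = c * ∏ p ∈ D.support, (ζ - p) ^ (D p))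
    (hg : ∀ ζ, g ζ = d * ∏ q ∈ E.support, (ζ - q) ^ (E q)) :
    ∏ p ∈ D.support, g p ^ (D p) = ∏ q ∈ E.support, f q ^ (E q) :=
  meromorphic_resultant_symm_general D E c d hc hd hD hE f g hf hg
end

section
/- Let μ and ν be signed measures on the Riemann sphere of zero net mass given by the divisors of rational functions f and g respectively, i.e., μ = Σ δ-masses at zeros of f minus poles of f, and similarly for ν, with the supports of μ and ν disjoint. Then the mutual logarithmic energy satisfies I(μ,ν) = ∫∫ log(1/|z-ζ|) dμ(z) dν(ζ) = -log|Res(f,g)|. -/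
open Finset

theorem Real.log_norm_prod_zpow {ι 𝕜 : Type*} [NormedField 𝕜] (s : Finset ι) (a : ι → 𝕜)
    (n : ι → ℤ) (ha : ∀ i ∈ s, a i ≠ 0) :
    Real.log ‖∏ i ∈ s, a i ^ n i‖ = ∑ i ∈ s, (n i : ℝ) * Real.log ‖a i‖ := by
  rw [norm_prod, Real.log_prod]
  · simp only [norm_zpow, Real.log_zpow]
  · exact fun i hi => norm_ne_zero_iff.mpr (zpow_ne_zero _ (ha i hi))

theorem mutual_energy_eq_neg_log_resultant_general (D E : ℂ →₀ ℤ)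
    (hdisj : Disjoint D.support E.support)
    (g : ℂ → ℂ)
    (hg : ∀ z, g z = ∏ q ∈ E.support, (z - q) ^ (E q)) :
    ∑ p ∈ D.support, ∑ q ∈ E.support,
        ((D p : ℝ) * (E q : ℝ)) * Real.log (1 / ‖p - q‖) =
      - Real.log (‖∏ p ∈ D.support, g p ^ (D p)‖) := by
  have hsub : ∀ p ∈ D.support, ∀ q ∈ E.support, p - q ≠ 0 := fun p hp q hq h =>
    disjoint_left.mp hdisj hp (sub_eq_zero.mp h ▸ hq)
  have hg_ne : ∀ p ∈ D.support, g p ≠ 0 := fun p hp => by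
    rw [hg]
    exact prod_ne_zero_iff.mpr fun q hq => zpow_ne_zero _ (hsub p hp q hq)
  rw [Real.log_norm_prod_zpow _ _ _ hg_ne, ← sum_neg_distrib]
  refine sum_congr rfl fun p hp => ?_
  rw [hg, Real.log_norm_prod_zpow _ _ _ (hsub p hp), mul_sum, ← sum_neg_distrib]
  refine sum_congr rfl fun q _ => ?_
  rw [one_div, Real.log_inv]
  ring

/-- Let `μ` and `ν` be signed measures on the Riemann sphere of zero net mass given by the
divisors `D, E : ℂ →₀ ℤ` of the rational functions `f(z) = ∏_p (z-p)^{D p}` and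
`g(z) = ∏_q (z-q)^{E q}` (δ-masses at zeros minus poles), with disjoint supports.
Then the mutual logarithmic energy satisfies
`I(μ,ν) = ∫∫ log(1/|z-ζ|) dμ(z) dν(ζ) = -log|Res(f,g)|`, where
`Res(f,g) = ∏_p g(p)^{D p}`. -/
theorem mutual_energy_eq_neg_log_resultant (D E : ℂ →₀ ℤ)
    (hD : D.sum (fun _ n => n) = 0) (hE : E.sum (fun _ n => n) = 0)
    (hdisj : Disjoint D.support E.support)
    (f g : ℂ → ℂ)
    (hf : ∀ z, f z = ∏ p ∈ D.support, (z - p) ^ (D p))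
    (hg : ∀ z, g z = ∏ q ∈ E.support, (z - q) ^ (E q)) :
    ∑ p ∈ D.support, ∑ q ∈ E.support,
        ((D p : ℝ) * (E q : ℝ)) * Real.log (1 / ‖p - q‖) =
      - Real.log (‖∏ p ∈ D.support, g p ^ (D p)‖) :=
  mutual_energy_eq_neg_log_resultant_general D E hdisj g hg
end
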